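/- arXiv:1811.12138 — 6 statements merged into one kernel-verified Lean document; each statement's English description precedes it below -/
import Mathlib

section
/- Let G be a simple graph on n vertices and let λ₁ be the largest eigenvalue of its adjacency matrix. Then EE(G) ≥ e^{λ₁} + (n − 1) − λ₁, where EE(G) is the Estrada index of G. -/
/-- The adjacency matrix of a simple graph over `ℝ` is Hermitian. -/
theorem adjHerm {n : ℕ} (G : SimpleGraph (Fin n)) [DecidableRel G.Adj] :
    (G.adjMatrix ℝ).IsHermitian := by
  rw [Matrix.IsHermitian, Matrix.conjTranspose_eq_transpose_of_trivial]
  exact G.isSymm_adjMatrix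

/-- The (real) eigenvalues of the adjacency matrix of `G`. -/
noncomputable def graphEigs {n : ℕ} (G : SimpleGraph (Fin n)) [DecidableRel G.Adj] :
    Fin n → ℝ := (adjHerm G).eigenvalues

/-- The Estrada index `EE(G) = ∑ i, exp (λ i)`. -/
noncomputable def estradaIndex {n : ℕ} (G : SimpleGraph (Fin n)) [DecidableRel G.Adj] : ℝ :=
  ∑ i, Real.exp (graphEigs G i)

/-!
Every summand `e^{λ_j} - λ_j - 1` of `EE(G) - ∑ λ_j - n` is nonnegative, so the sum dominates
the summand of `λ₁`; and `∑ λ_j = tr A(G) = 0` since a simple graph has no loops.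
-/

open Finset

lemma Real.exp_sub_sub_one_le_sum {ι : Type*} [Fintype ι] (x : ι → ℝ) (i : ι) :
    Real.exp (x i) - x i - 1 ≤ ∑ j, (Real.exp (x j) - x j - 1) :=
  single_le_sum (f := fun j ↦ Real.exp (x j) - x j - 1)
    (fun j _ ↦ by linarith [Real.add_one_le_exp (x j)]) (mem_univ i)

lemma sum_graphEigs {n : ℕ} (G : SimpleGraph (Fin n)) [DecidableRel G.Adj] :
    ∑ i, graphEigs G i = 0 := by
  have := (adjHerm G).trace_eq_sum_eigenvalues
  simp only [SimpleGraph.trace_adjMatrix, RCLike.ofReal_real_eq_id, id] at this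
  exact this.symm

/-- For a simple graph `G` on `n` vertices with largest adjacency
eigenvalue `λ₁`, one has `EE(G) ≥ e^{λ₁} + (n − 1) − λ₁`. -/
theorem estrada_ge_exp_lam_one {n : ℕ} (G : SimpleGraph (Fin n)) [DecidableRel G.Adj]
    (lam1 : ℝ) (hlam : IsGreatest (Set.range (graphEigs G)) lam1) :
    estradaIndex G ≥ Real.exp lam1 + ((n : ℝ) - 1) - lam1 := by
  obtain ⟨i, rfl⟩ := hlam.1
  have key := Real.exp_sub_sub_one_le_sum (graphEigs G) i
  rw [sum_sub_distrib, sum_sub_distrib, sum_graphEigs, sum_const, card_univ,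
    Fintype.card_fin, nsmul_one] at key
  rw [estradaIndex]
  linarith
end

section
/- Let G be a simple graph on n ≥ 1 vertices with m edges. Then EE(G) ≥ e^{2m/n} + n − 1 − 2m/n, with equality if and only if G is the empty graph on n vertices (no edges). -/
/-!
The all-ones vector has Rayleigh quotient `2m/n`, so the largest adjacency eigenvalue `λ` is at
least `2m/n`, and the eigenvalues sum to `tr A = 0`. Since `eˣ - x ≥ 1`, with equality only at
`x = 0`, the remaining `n - 1` eigenvalues contribute at least `(n - 1) - λ` to the Estrada
index, so `EE(G) ≥ e^λ - λ + n - 1 ≥ e^{2m/n} - 2m/n + n - 1`, the last step because `eˣ - x`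
increases on `[0, ∞)`. Equality forces every eigenvalue to vanish, i.e. `A = 0`.
-/

open Matrix Finset Real
open scoped Pointwise

namespace Matrix.IsHermitian

variable {n : Type*} [Fintype n] [DecidableEq n] {A : Matrix n n ℝ}

lemma posSemidef_smul_one_sub_of_eigenvalues_le (hA : A.IsHermitian) {c : ℝ}
    (hc : ∀ i, hA.eigenvalues i ≤ c) : (c • 1 - A).PosSemidef := by
  have hB : (c • 1 - A).IsHermitian := (isHermitian_one.smul (IsSelfAdjoint.all c)).sub hA
  rw [hB.posSemidef_iff_eigenvalues_nonneg]
  intro i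
  have hi : hB.eigenvalues i ∈ ({c} : Set ℝ) - spectrum ℝ A := by
    rw [spectrum.singleton_sub_eq, Algebra.algebraMap_eq_smul_one]
    exact hB.eigenvalues_mem_spectrum_real i
  rw [hA.spectrum_real_eq_range_eigenvalues] at hi
  obtain ⟨_, rfl, _, ⟨j, rfl⟩, hj⟩ := hi
  simpa [← hj] using hc j

lemma dotProduct_mulVec_le_of_eigenvalues_le (hA : A.IsHermitian) {c : ℝ}
    (hc : ∀ i, hA.eigenvalues i ≤ c) (v : n → ℝ) : v ⬝ᵥ (A *ᵥ v) ≤ c * (v ⬝ᵥ v) := by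
  have := (hA.posSemidef_smul_one_sub_of_eigenvalues_le hc).dotProduct_mulVec_nonneg v
  simpa [sub_mulVec, dotProduct_sub, smul_mulVec, dotProduct_smul] using this

end Matrix.IsHermitian

lemma Real.monotoneOn_exp_sub_self : MonotoneOn (fun x ↦ exp x - x) (Set.Ici 0) := by
  intro a ha b _ hab
  have hexp : exp b = exp a * exp (b - a) := by rw [← exp_add, add_sub_cancel]
  nlinarith [add_one_le_exp (b - a), one_le_exp (Set.mem_Ici.mp ha)]

section ZeroSum

variable {ι : Type*} [Fintype ι] [DecidableEq ι] {μ : ι → ℝ}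

lemma sum_exp_sub_eq_sum_erase (hμ : ∑ i, μ i = 0) (j : ι) :
    ∑ i, exp (μ i) - (exp (μ j) - μ j + (Fintype.card ι - 1)) =
      ∑ i ∈ univ.erase j, (exp (μ i) - (μ i + 1)) := by
  have hrest : ∑ i ∈ univ.erase j, μ i = -μ j := by
    rw [sum_erase_eq_sub (mem_univ j), hμ, zero_sub]
  rw [sum_sub_distrib, sum_add_distrib, hrest, sum_erase_eq_sub (mem_univ j), sum_const,
    card_erase_of_mem (mem_univ j), card_univ, nsmul_one,
    Nat.cast_pred (Fintype.card_pos_iff.mpr ⟨j⟩)]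
  ring

lemma exp_sub_self_add_card_sub_one_le_sum_exp (hμ : ∑ i, μ i = 0) (j : ι) :
    exp (μ j) - μ j + (Fintype.card ι - 1) ≤ ∑ i, exp (μ i) := by
  have hdiff := sum_exp_sub_eq_sum_erase hμ j
  have hnonneg : 0 ≤ ∑ i ∈ univ.erase j, (exp (μ i) - (μ i + 1)) :=
    sum_nonneg fun i _ ↦ sub_nonneg.mpr (add_one_le_exp (μ i))
  linarith

lemma eq_zero_of_sum_exp_eq (hμ : ∑ i, μ i = 0) (j : ι)
    (h : ∑ i, exp (μ i) = exp (μ j) - μ j + (Fintype.card ι - 1)) : μ = 0 := by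
  have hsum := sum_exp_sub_eq_sum_erase hμ j
  rw [h, sub_self, eq_comm,
    sum_eq_zero_iff_of_nonneg fun i _ ↦ sub_nonneg.mpr (add_one_le_exp (μ i))] at hsum
  have hne : ∀ i ≠ j, μ i = 0 := fun i hi ↦ by
    by_contra h0
    exact (sub_pos.mpr (add_one_lt_exp h0)).ne' (hsum i (mem_erase.mpr ⟨hi, mem_univ i⟩))
  have hj : μ j = 0 := by
    rwa [← add_sum_erase _ _ (mem_univ j),
      sum_eq_zero fun i hi ↦ hne i (ne_of_mem_erase hi), add_zero] at hμ
  funext i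
  rcases eq_or_ne i j with rfl | hij
  exacts [hj, hne i hij]

end ZeroSum

namespace SimpleGraph

variable {n : ℕ} (G : SimpleGraph (Fin n)) [DecidableRel G.Adj]

lemma sum_graphEigs : ∑ i, graphEigs G i = 0 := by
  simpa [graphEigs] using (adjHerm G).trace_eq_sum_eigenvalues.symm

lemma two_mul_card_edgeFinset_le {c : ℝ} (hc : ∀ i, graphEigs G i ≤ c) :
    2 * (#G.edgeFinset : ℝ) ≤ c * n := by
  have h := (adjHerm G).dotProduct_mulVec_le_of_eigenvalues_le hc 1
  rw [dotProduct_comm, ← natCast_card_dart_eq_dotProduct, dart_card_eq_twice_card_edges] at h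
  simpa [dotProduct] using h

lemma graphEigs_eq_zero_iff : graphEigs G = 0 ↔ G = ⊥ := by
  rw [graphEigs, (adjHerm G).eigenvalues_eq_zero_iff]
  refine ⟨fun h ↦ ?_, fun h ↦ by subst h; ext a b; simp [adjMatrix_apply]⟩
  ext a b
  simpa [adjMatrix_apply] using congrFun₂ h a b

end SimpleGraph

open SimpleGraph in
/-- For a simple graph on `n ≥ 1` vertices with `m` edges,
`EE(G) ≥ e^{2m/n} + n − 1 − 2m/n`, with equality iff `G` is the empty graph. -/
theorem estrada_ge_exp_two_m_div_n {n : ℕ} (hn : 1 ≤ n)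
    (G : SimpleGraph (Fin n)) [DecidableRel G.Adj] :
    estradaIndex G ≥
      Real.exp (2 * (G.edgeFinset.card : ℝ) / n) + (n : ℝ) - 1 -
        2 * (G.edgeFinset.card : ℝ) / n ∧
    (estradaIndex G =
      Real.exp (2 * (G.edgeFinset.card : ℝ) / n) + (n : ℝ) - 1 -
        2 * (G.edgeFinset.card : ℝ) / n ↔ G = ⊥) := by
  have : Nonempty (Fin n) := ⟨⟨0, hn⟩⟩
  obtain ⟨j, hj⟩ := Finite.exists_max (graphEigs G)
  set t := 2 * (#G.edgeFinset : ℝ) / n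
  have ht : 0 ≤ t := by positivity
  have htj : t ≤ graphEigs G j := by
    rw [div_le_iff₀ (by exact_mod_cast hn)]
    exact G.two_mul_card_edgeFinset_le hj
  have hmono : exp t - t ≤ exp (graphEigs G j) - graphEigs G j :=
    monotoneOn_exp_sub_self ht (ht.trans htj) htj
  have hlower := exp_sub_self_add_card_sub_one_le_sum_exp G.sum_graphEigs j
  rw [Fintype.card_fin] at hlower
  refine ⟨by rw [estradaIndex]; linarith, fun h ↦ ?_, fun h ↦ ?_⟩
  · rw [← graphEigs_eq_zero_iff]
    refine eq_zero_of_sum_exp_eq G.sum_graphEigs j ?_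
    rw [estradaIndex] at h
    rw [Fintype.card_fin]
    linarith
  · have hm : #G.edgeFinset = 0 := card_eq_zero.mpr (edgeFinset_eq_empty.mpr h)
    simp [estradaIndex, (graphEigs_eq_zero_iff G).mpr h, t, hm]
end

section
/- Let G be a bipartite simple graph on n ≥ 2 vertices with largest adjacency eigenvalue λ₁. Then EE(G) ≥ 2·cosh(λ₁) + n − 2. -/
open Matrix Finset

theorem two_mul_cosh_add_card_sub_two_le_sum_exp {ι : Type*} [Fintype ι] {x : ι → ℝ}
    (hx : ∑ k, x k = 0) {i j : ι} (hij : x j = -x i) :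
    2 * Real.cosh (x i) + ((Fintype.card ι : ℝ) - 2) ≤ ∑ k, Real.exp (x k) := by
  classical
  set f : ι → ℝ := fun k => Real.exp (x k) - (x k + 1)
  have hf : ∀ k, 0 ≤ f k := fun k => sub_nonneg.2 (Real.add_one_le_exp (x k))
  have hpair : f i + f j ≤ ∑ k, f k := by
    by_cases h : i = j
    · subst h
      have hi : x i = 0 := by linarith
      have : f i = 0 := by simp [f, hi]
      simpa [this] using single_le_sum (fun k _ => hf k) (mem_univ i)
    · rw [← sum_pair h]
      exact sum_le_sum_of_subset_of_nonneg (subset_univ _) fun k _ _ => hf k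
  have hsum_f : ∑ k, f k = ∑ k, Real.exp (x k) - Fintype.card ι := by
    simp [f, sum_sub_distrib, sum_add_distrib, hx]
  rw [hsum_f] at hpair
  simp only [f, hij, Real.cosh_eq] at hpair ⊢
  linarith

namespace SimpleGraph

variable {V R : Type*} [Fintype V] [DecidableEq V] [CommRing R] {G : SimpleGraph V}

def Coloring.signMatrix (c : G.Coloring (Fin 2)) : Matrix V V R :=
  diagonal fun v => (-1) ^ (c v : ℕ)

theorem Coloring.signMatrix_mul_self (c : G.Coloring (Fin 2)) :
    c.signMatrix * c.signMatrix = (1 : Matrix V V R) := by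
  simp [signMatrix, diagonal_mul_diagonal, ← pow_add, ← two_mul, pow_mul]

theorem Coloring.signMatrix_mul_adjMatrix_mul_signMatrix [DecidableRel G.Adj]
    (c : G.Coloring (Fin 2)) :
    c.signMatrix * G.adjMatrix R * c.signMatrix = -G.adjMatrix R := by
  ext a b
  rw [signMatrix, mul_diagonal, diagonal_mul, neg_apply, adjMatrix_apply]
  by_cases hab : G.Adj a b
  · have hcol : (c a : ℕ) + c b = 1 := by
      have := c.valid hab
      omega
    simp [hab, ← pow_add, hcol]
  · simp [hab]

theorem Colorable.neg_mem_spectrum_adjMatrix [DecidableRel G.Adj] (hbip : G.Colorable 2)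
    {μ : R} (hμ : μ ∈ spectrum R (G.adjMatrix R)) : -μ ∈ spectrum R (G.adjMatrix R) := by
  obtain ⟨c⟩ := hbip
  let s : (Matrix V V R)ˣ :=
    ⟨c.signMatrix, c.signMatrix, c.signMatrix_mul_self, c.signMatrix_mul_self⟩
  have hspec : spectrum R (-G.adjMatrix R) = spectrum R (G.adjMatrix R) := by
    rw [← c.signMatrix_mul_adjMatrix_mul_signMatrix]
    exact spectrum.units_conjugate (u := s)
  rw [← hspec, ← spectrum.neg_eq]
  simpa using hμ

end SimpleGraph

theorem estrada_ge_two_cosh_of_bipartite_general {n : ℕ}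
    (G : SimpleGraph (Fin n)) [DecidableRel G.Adj] (hbip : G.Colorable 2)
    (lam1 : ℝ) (hlam : IsGreatest (Set.range (graphEigs G)) lam1) :
    estradaIndex G ≥ 2 * Real.cosh lam1 + ((n : ℝ) - 2) := by
  obtain ⟨i, rfl⟩ := hlam.1
  have hsum : ∑ k, graphEigs G k = 0 := by
    simpa [graphEigs, SimpleGraph.trace_adjMatrix] using
      ((adjHerm G).trace_eq_sum_eigenvalues).symm
  obtain ⟨j, hj⟩ : ∃ j, graphEigs G j = -graphEigs G i := by
    have := hbip.neg_mem_spectrum_adjMatrix ((adjHerm G).eigenvalues_mem_spectrum_real i)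
    rwa [(adjHerm G).spectrum_real_eq_range_eigenvalues] at this
  simpa [estradaIndex] using two_mul_cosh_add_card_sub_two_le_sum_exp hsum hj

/-- For a bipartite simple graph `G` on `n ≥ 2` vertices with largest
adjacency eigenvalue `λ₁`, one has `EE(G) ≥ 2·cosh(λ₁) + n − 2`. -/
theorem estrada_ge_two_cosh_of_bipartite {n : ℕ} (hn : 2 ≤ n)
    (G : SimpleGraph (Fin n)) [DecidableRel G.Adj] (hbip : G.Colorable 2)
    (lam1 : ℝ) (hlam : IsGreatest (Set.range (graphEigs G)) lam1) :
    estradaIndex G ≥ 2 * Real.cosh lam1 + ((n : ℝ) - 2) :=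
  estrada_ge_two_cosh_of_bipartite_general G hbip lam1 hlam
end

section
/- Let G be a connected simple graph on n vertices with largest adjacency eigenvalue λ₁, and let d(i) denote the degree of vertex i. Then λ₁ ≥ sqrt( (Σ_{i∈V(G)} d(i)²) / n ). -/
open Matrix

namespace Matrix

variable {ι : Type*} [Fintype ι]

theorem abs_dotProduct_mulVec_le {A : Matrix ι ι ℝ} (hA₀ : ∀ i j, 0 ≤ A i j) (x : ι → ℝ) :
    |x ⬝ᵥ A *ᵥ x| ≤ |x| ⬝ᵥ A *ᵥ |x| := by
  simp only [dotProduct, mulVec, Finset.mul_sum, Pi.abs_apply]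
  refine (Finset.abs_sum_le_sum_abs _ _).trans (Finset.sum_le_sum fun i _ => ?_)
  refine (Finset.abs_sum_le_sum_abs _ _).trans_eq (Finset.sum_congr rfl fun j _ => ?_)
  rw [abs_mul, abs_mul, abs_of_nonneg (hA₀ i j)]

namespace IsHermitian

variable [DecidableEq ι] {A : Matrix ι ι ℝ}

theorem dotProduct_eq_sum_eigenvectorBasis (hA : A.IsHermitian) (x y : ι → ℝ) :
    x ⬝ᵥ y = ∑ i, (⇑(hA.eigenvectorBasis i) ⬝ᵥ x) * (⇑(hA.eigenvectorBasis i) ⬝ᵥ y) := by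
  simpa [EuclideanSpace.inner_eq_star_dotProduct, dotProduct_comm]
    using (hA.eigenvectorBasis.sum_inner_mul_inner (WithLp.toLp 2 x) (WithLp.toLp 2 y)).symm

theorem eigenvectorBasis_dotProduct_mulVec (hA : A.IsHermitian) (i : ι) (x : ι → ℝ) :
    ⇑(hA.eigenvectorBasis i) ⬝ᵥ A *ᵥ x = hA.eigenvalues i * (⇑(hA.eigenvectorBasis i) ⬝ᵥ x) := by
  rw [dotProduct_mulVec, ← mulVec_transpose, ← conjTranspose_eq_transpose_of_trivial, hA.eq,
    mulVec_eigenvectorBasis, smul_dotProduct, smul_eq_mul]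

theorem dotProduct_mulVec_le (hA : A.IsHermitian) {c : ℝ} (hc : ∀ i, hA.eigenvalues i ≤ c)
    (x : ι → ℝ) : x ⬝ᵥ A *ᵥ x ≤ c * (x ⬝ᵥ x) := by
  rw [hA.dotProduct_eq_sum_eigenvectorBasis x, hA.dotProduct_eq_sum_eigenvectorBasis x,
    Finset.mul_sum]
  refine Finset.sum_le_sum fun i _ => ?_
  rw [eigenvectorBasis_dotProduct_mulVec, mul_left_comm]
  exact mul_le_mul_of_nonneg_right (hc i) (mul_self_nonneg _)

theorem mulVec_dotProduct_mulVec_le (hA : A.IsHermitian) {c : ℝ}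
    (hc : ∀ i, |hA.eigenvalues i| ≤ c) (x : ι → ℝ) :
    A *ᵥ x ⬝ᵥ A *ᵥ x ≤ c ^ 2 * (x ⬝ᵥ x) := by
  rw [hA.dotProduct_eq_sum_eigenvectorBasis, hA.dotProduct_eq_sum_eigenvectorBasis x,
    Finset.mul_sum]
  refine Finset.sum_le_sum fun i _ => ?_
  rw [eigenvectorBasis_dotProduct_mulVec, mul_mul_mul_comm, ← abs_mul_abs_self, sq]
  exact mul_le_mul_of_nonneg_right (mul_self_le_mul_self (abs_nonneg _) (hc i)) (mul_self_nonneg _)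

theorem eigenvectorBasis_dotProduct_self (hA : A.IsHermitian) (i : ι) :
    ⇑(hA.eigenvectorBasis i) ⬝ᵥ ⇑(hA.eigenvectorBasis i) = 1 := by
  have h := orthonormal_iff_ite.mp hA.eigenvectorBasis.orthonormal i i
  rwa [if_pos rfl, EuclideanSpace.inner_eq_star_dotProduct, star_trivial] at h

theorem abs_eigenvalues_le_of_nonneg (hA : A.IsHermitian) (hA₀ : ∀ i j, 0 ≤ A i j) {c : ℝ}
    (hc : ∀ i, hA.eigenvalues i ≤ c) (i : ι) : |hA.eigenvalues i| ≤ c := by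
  set v := ⇑(hA.eigenvectorBasis i)
  have hv : v ⬝ᵥ A *ᵥ v = hA.eigenvalues i := by
    rw [eigenvectorBasis_dotProduct_mulVec, eigenvectorBasis_dotProduct_self, mul_one]
  have habs : |v| ⬝ᵥ |v| = 1 := by
    simpa only [dotProduct, Pi.abs_apply, abs_mul_abs_self] using
      hA.eigenvectorBasis_dotProduct_self i
  calc |hA.eigenvalues i| = |v ⬝ᵥ A *ᵥ v| := by rw [hv]
    _ ≤ |v| ⬝ᵥ A *ᵥ |v| := abs_dotProduct_mulVec_le hA₀ v
    _ ≤ c * (|v| ⬝ᵥ |v|) := hA.dotProduct_mulVec_le hc |v|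
    _ = c := by rw [habs, mul_one]

end IsHermitian

end Matrix

namespace SimpleGraph

theorem adjMatrix_apply_nonneg {V α : Type*} [Semiring α] [PartialOrder α] [IsOrderedRing α]
    (G : SimpleGraph V) [DecidableRel G.Adj] (v w : V) : 0 ≤ G.adjMatrix α v w := by
  rw [adjMatrix_apply]
  split_ifs <;> simp

theorem adjMatrix_mulVec_one {V α : Type*} [Fintype V] [NonAssocSemiring α] (G : SimpleGraph V)
    [DecidableRel G.Adj] : G.adjMatrix α *ᵥ 1 = fun v => (G.degree v : α) := by
  ext v
  rw [← Function.const_one, adjMatrix_mulVec_const_apply, mul_one]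

end SimpleGraph

theorem lam_one_ge_sqrt_sum_deg_sq_general {n : ℕ} (G : SimpleGraph (Fin n)) [DecidableRel G.Adj]
    (lam1 : ℝ) (hlam : IsGreatest (Set.range (graphEigs G)) lam1) :
    lam1 ≥ Real.sqrt ((∑ i, (G.degree i : ℝ) ^ 2) / n) := by
  have hA := adjHerm G
  have habs : ∀ i, |hA.eigenvalues i| ≤ lam1 :=
    hA.abs_eigenvalues_le_of_nonneg G.adjMatrix_apply_nonneg fun i => hlam.2 ⟨i, rfl⟩
  obtain ⟨i, -⟩ := hlam.1
  have hdeg : ∑ i, (G.degree i : ℝ) ^ 2 ≤ lam1 ^ 2 * n := by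
    simpa [G.adjMatrix_mulVec_one, dotProduct, sq] using hA.mulVec_dotProduct_mulVec_le habs 1
  rw [ge_iff_le, Real.sqrt_le_left ((abs_nonneg _).trans (habs i))]
  exact div_le_of_le_mul₀ n.cast_nonneg (sq_nonneg _) hdeg

/-- For a connected simple graph `G` on `n` vertices,
`λ₁ ≥ sqrt((∑ d(i)²)/n)`. -/
theorem lam_one_ge_sqrt_sum_deg_sq {n : ℕ} (G : SimpleGraph (Fin n)) [DecidableRel G.Adj]
    (hconn : G.Connected) (lam1 : ℝ) (hlam : IsGreatest (Set.range (graphEigs G)) lam1) :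
    lam1 ≥ Real.sqrt ((∑ i, (G.degree i : ℝ) ^ 2) / n) :=
  lam_one_ge_sqrt_sum_deg_sq_general G lam1 hlam
end

section
/- Let G be a simple graph on n vertices with at least one edge, let d(i) be the degree of vertex i and d₂(i) = Σ_{j adjacent to i} d(j). Then sqrt( (Σ_i d₂(i)²) / (Σ_i d(i)²) ) ≥ sqrt( (Σ_i d(i)²) / n ). -/
open Finset

theorem Finset.sum_div_card_le_sum_sq_div_sum {ι : Type*} (s : Finset ι) (x : ι → ℝ)
    (hx : 0 ≤ ∑ i ∈ s, x i) :
    (∑ i ∈ s, x i) / #s ≤ (∑ i ∈ s, x i ^ 2) / ∑ i ∈ s, x i := by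
  rcases hx.eq_or_lt with hzero | hpos
  · simp [← hzero]
  have hcard : (0 : ℝ) < #s := by
    obtain ⟨i, hi, -⟩ := exists_ne_zero_of_sum_ne_zero hpos.ne'
    exact_mod_cast card_pos.mpr ⟨i, hi⟩
  rw [div_le_div_iff₀ hcard hpos, ← sq, mul_comm]
  exact sq_sum_le_card_mul_sum_sq

theorem SimpleGraph.sum_sum_neighborFinset {V M : Type*} [Fintype V] [AddCommMonoid M]
    (G : SimpleGraph V) [DecidableRel G.Adj] (f : V → M) :
    ∑ i, ∑ j ∈ G.neighborFinset i, f j = ∑ j, G.degree j • f j := by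
  rw [sum_comm' (t' := univ) (s' := fun j => G.neighborFinset j)
    (fun i j => by simp [G.adj_comm])]
  simp only [sum_const, card_neighborFinset_eq_degree]

theorem sqrt_ratio_ge_sqrt_avg_deg_sq_general {n : ℕ} (G : SimpleGraph (Fin n)) [DecidableRel G.Adj] :
    Real.sqrt
      ((∑ i, (∑ j ∈ G.neighborFinset i, (G.degree j : ℝ)) ^ 2) /
        (∑ i, (G.degree i : ℝ) ^ 2)) ≥
    Real.sqrt ((∑ i, (G.degree i : ℝ) ^ 2) / n) := by
  have hsum : ∑ i, ∑ j ∈ G.neighborFinset i, (G.degree j : ℝ) = ∑ i, (G.degree i : ℝ) ^ 2 := by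
    simp only [G.sum_sum_neighborFinset, nsmul_eq_mul, sq]
  have hmean := sum_div_card_le_sum_sq_div_sum univ
    (fun i => ∑ j ∈ G.neighborFinset i, (G.degree j : ℝ)) (by rw [hsum]; positivity)
  rw [hsum, card_univ, Fintype.card_fin] at hmean
  exact Real.sqrt_le_sqrt hmean

/-- For a simple graph on `n` vertices with at least one edge,
`sqrt((∑ d₂(i)²)/(∑ d(i)²)) ≥ sqrt((∑ d(i)²)/n)`. -/
theorem sqrt_ratio_ge_sqrt_avg_deg_sq {n : ℕ} (G : SimpleGraph (Fin n)) [DecidableRel G.Adj]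
    (hedge : G.edgeSet.Nonempty) :
    Real.sqrt
      ((∑ i, (∑ j ∈ G.neighborFinset i, (G.degree j : ℝ)) ^ 2) /
        (∑ i, (G.degree i : ℝ) ^ 2)) ≥
    Real.sqrt ((∑ i, (G.degree i : ℝ) ^ 2) / n) :=
  sqrt_ratio_ge_sqrt_avg_deg_sq_general G
end

section
/- Let R be a real symmetric ℓ×ℓ matrix with eigenvalues ρ₁ ≥ ρ₂ ≥ … ≥ ρ_ℓ. Then EE(R) ≥ e^{ρ₁} + (ℓ − 1) + Tr(R) − ρ₁, with equality if and only if ρ₂ = ρ₃ = … = ρ_ℓ = 0. -/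
/-- The Euclidean norm of a vector in `ℝ^ℓ`. -/
noncomputable def eucNorm {l : ℕ} (v : Fin l → ℝ) : ℝ := Real.sqrt (∑ i, v i ^ 2)

/-- The sequence `ξ^(k) = ‖R^{k+1} f‖ / ‖R^k f‖`. -/
noncomputable def xiSeq {l : ℕ} (R : Matrix (Fin l) (Fin l) ℝ) (f : Fin l → ℝ) (k : ℕ) : ℝ :=
  eucNorm ((R ^ (k + 1)).mulVec f) / eucNorm ((R ^ k).mulVec f)

/-- A real symmetric matrix is Hermitian. -/
theorem Matrix.IsSymm.isHermitianReal {l : ℕ} {R : Matrix (Fin l) (Fin l) ℝ}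
    (hR : R.IsSymm) : R.IsHermitian := by
  rwa [Matrix.IsHermitian, Matrix.conjTranspose_eq_transpose_of_trivial]

/-!
Since `e^x ≥ 1 + x` with equality only at `x = 0`, summing over all eigenvalues except `ρ₁`
gives `EE(R) - e^{ρ₁} ≥ (ℓ - 1) + (Tr R - ρ₁)`, because the trace is the sum of the eigenvalues.
-/

open Finset

theorem Real.sum_add_one_le_sum_exp {ι : Type*} (s : Finset ι) (x : ι → ℝ) :
    ∑ i ∈ s, (x i + 1) ≤ ∑ i ∈ s, Real.exp (x i) :=
  sum_le_sum fun i _ => Real.add_one_le_exp (x i)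

theorem Real.sum_add_one_eq_sum_exp_iff {ι : Type*} (s : Finset ι) (x : ι → ℝ) :
    ∑ i ∈ s, (x i + 1) = ∑ i ∈ s, Real.exp (x i) ↔ ∀ i ∈ s, x i = 0 := by
  rw [sum_eq_sum_iff_of_le fun i _ => Real.add_one_le_exp (x i)]
  refine forall₂_congr fun i _ => ⟨fun h => ?_, fun h => by simp [h]⟩
  by_contra hne
  exact (Real.add_one_lt_exp hne).ne h

theorem Finset.card_sub_one_add_sum_sub_eq_sum_erase_add_one {ι : Type*} [Fintype ι]
    [DecidableEq ι] (x : ι → ℝ) (i₀ : ι) :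
    ((Fintype.card ι : ℝ) - 1) + ∑ i, x i - x i₀ = ∑ i ∈ univ.erase i₀, (x i + 1) := by
  rw [sum_add_distrib, ← add_sum_erase univ x (mem_univ i₀), sum_const, nsmul_one,
    ← card_univ, ← card_erase_add_one (mem_univ i₀)]
  push_cast
  ring

theorem Matrix.IsHermitian.trace_eq_sum_eigenvalues_comp {n : Type*} [Fintype n] [DecidableEq n]
    {A : Matrix n n ℝ} (hA : A.IsHermitian) (σ : Equiv.Perm n) :
    A.trace = ∑ i, (hA.eigenvalues ∘ σ) i := by
  rw [hA.trace_eq_sum_eigenvalues, Function.comp_def, Equiv.sum_comp σ hA.eigenvalues]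
  rfl

theorem estradaMatrix_ge_exp_rho_one_general {l : ℕ} (hl : 0 < l)
    (R : Matrix (Fin l) (Fin l) ℝ) (hR : R.IsSymm)
    (rho : Fin l → ℝ)
    (hperm : ∃ σ : Equiv.Perm (Fin l), rho = hR.isHermitianReal.eigenvalues ∘ σ) :
    (∑ i, Real.exp (rho i)) ≥
      Real.exp (rho ⟨0, hl⟩) + ((l : ℝ) - 1) + R.trace - rho ⟨0, hl⟩ ∧
    ((∑ i, Real.exp (rho i)) =
      Real.exp (rho ⟨0, hl⟩) + ((l : ℝ) - 1) + R.trace - rho ⟨0, hl⟩ ↔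
      ∀ i : Fin l, i ≠ ⟨0, hl⟩ → rho i = 0) := by
  obtain ⟨σ, hσ⟩ := hperm
  set i₀ : Fin l := ⟨0, hl⟩
  have htrace : R.trace = ∑ i, rho i := hσ ▸ hR.isHermitianReal.trace_eq_sum_eigenvalues_comp σ
  have hrhs : Real.exp (rho i₀) + ((l : ℝ) - 1) + R.trace - rho i₀ =
      Real.exp (rho i₀) + ∑ i ∈ univ.erase i₀, (rho i + 1) := by
    rw [← card_sub_one_add_sum_sub_eq_sum_erase_add_one rho i₀, htrace, Fintype.card_fin]
    ring
  rw [hrhs, ← add_sum_erase univ _ (mem_univ i₀), ge_iff_le, add_le_add_iff_left,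
    add_right_inj, eq_comm, Real.sum_add_one_eq_sum_exp_iff]
  exact ⟨Real.sum_add_one_le_sum_exp _ rho, by simp [mem_erase]⟩

/-- For a real symmetric `ℓ×ℓ` matrix `R` with eigenvalues
`ρ₁ ≥ … ≥ ρ_ℓ`, one has `EE(R) ≥ e^{ρ₁} + (ℓ − 1) + Tr(R) − ρ₁`, with equality
iff `ρ₂ = … = ρ_ℓ = 0`. -/
theorem estradaMatrix_ge_exp_rho_one {l : ℕ} (hl : 0 < l)
    (R : Matrix (Fin l) (Fin l) ℝ) (hR : R.IsSymm)
    (rho : Fin l → ℝ) (hord : Antitone rho)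
    (hperm : ∃ σ : Equiv.Perm (Fin l), rho = hR.isHermitianReal.eigenvalues ∘ σ) :
    (∑ i, Real.exp (rho i)) ≥
      Real.exp (rho ⟨0, hl⟩) + ((l : ℝ) - 1) + R.trace - rho ⟨0, hl⟩ ∧
    ((∑ i, Real.exp (rho i)) =
      Real.exp (rho ⟨0, hl⟩) + ((l : ℝ) - 1) + R.trace - rho ⟨0, hl⟩ ↔
      ∀ i : Fin l, i ≠ ⟨0, hl⟩ → rho i = 0) :=
  estradaMatrix_ge_exp_rho_one_general hl R hR rho hperm
end
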